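/- For all real θ > 0, α > −1, every integer M ≥ 1 and all real x, y, the Christoffel–Darboux kernel of the 2M-point biorthogonal Hermite ensemble decomposes as K_{2M}^{Her(α)}(x,y) = K_M^{Lag((α−1)/2)}(x², y²) + x^θ y · K_M^{Lag((α+θ)/2)}(x², y²), where x^θ := sign(x)·|x|^θ. -/

import Mathlib

/-!
Splitting the Hermite kernel by the parity of the index leaves the two Laguerre sums
`∑_{n<M} Z_n^β((x²)^θ) Y_n^β(y²)` with `β = (α-1)/2` and `β = (α+θ)/2`, since `(x^θ)² = (x²)^θ`.
Such a sum is computed by expanding `Z_n` and `Y_n`. The alternating binomial sums in `Y_n`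
are `r`-th forward differences of Pochhammer polynomials of degree `n`, so they vanish for
`r > n` and every sum can be taken over `range M`. Exchanging the order of summation, the sum over
`n` collapses to `∑_{n<M} C(n,k) (c)_n / n! = (c)_M / (k! (M-1-k)! (c+k))`, and
`Γ(M + c) = Γ(c) (c)_M` turns the result into the Gamma ratios of `K^Lag`.
-/

/-- Signed power: `x^θ := sign(x)·|x|^θ`. -/
noncomputable def sgnPow (x θ : ℝ) : ℝ := Real.sign x * |x| ^ θ

/-- The Christoffel–Darboux kernel of the `M`-point biorthogonal Laguerre ensemble. -/
noncomputable def KLag (α θ : ℝ) (M : ℕ) (x y : ℝ) : ℝ :=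
  θ * ∑ k ∈ Finset.range M, ∑ i ∈ Finset.range M, ∑ r ∈ Finset.Icc i (M - 1),
    (Real.Gamma ((M : ℝ) + ((i : ℝ) + α + 1) / θ) /
        (Real.Gamma (α + θ * (k : ℝ) + 1) * Real.Gamma (((i : ℝ) + α + 1) / θ))) *
      ((-1) ^ (i + k) /
        ((Nat.factorial k : ℝ) * (Nat.factorial (M - 1 - k) : ℝ) *
          (Nat.factorial i : ℝ) * (Nat.factorial (r - i) : ℝ))) *
      (x ^ (θ * (k : ℝ)) * y ^ r / (α + θ * (k : ℝ) + (i : ℝ) + 1))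

/-- The Konhauser biorthogonal Laguerre polynomial `Z_n^α(x;θ)`. -/
noncomputable def konhauserZ (α θ : ℝ) (n : ℕ) (x : ℝ) : ℝ :=
  ∑ j ∈ Finset.range (n + 1),
    (n.choose j : ℝ) * (-1) ^ j * x ^ j / Real.Gamma (θ * (j : ℝ) + α + 1)

/-- The Konhauser biorthogonal Laguerre polynomial `Y_n^α(x;θ)`. -/
noncomputable def konhauserY (α θ : ℝ) (n : ℕ) (x : ℝ) : ℝ :=
  (1 / (Nat.factorial n : ℝ)) * ∑ r ∈ Finset.range (n + 1),
    (x ^ r / (Nat.factorial r : ℝ)) *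
      ∑ i ∈ Finset.range (r + 1),
        (-1) ^ i * (r.choose i : ℝ) *
          (ascPochhammer ℝ n).eval (((i : ℝ) + α + 1) / θ)

/-- The biorthogonal Hermite polynomial `S_i^α(u;θ)`:
`S_{2n} (u) = Z_n^{(α-1)/2}(u²;θ)`, `S_{2n+1}(u) = u · Z_n^{(α+θ)/2}(u²;θ)`. -/
noncomputable def hermiteS (α θ : ℝ) (i : ℕ) (u : ℝ) : ℝ :=
  if Even i then konhauserZ ((α - 1) / 2) θ (i / 2) (u ^ 2)
  else u * konhauserZ ((α + θ) / 2) θ (i / 2) (u ^ 2)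

/-- The biorthogonal Hermite polynomial `T_i^α(u;θ)`:
`T_{2n} (u) = Y_n^{(α-1)/2}(u²;θ)`, `T_{2n+1}(u) = u · Y_n^{(α+θ)/2}(u²;θ)`. -/
noncomputable def hermiteT (α θ : ℝ) (i : ℕ) (u : ℝ) : ℝ :=
  if Even i then konhauserY ((α - 1) / 2) θ (i / 2) (u ^ 2)
  else u * konhauserY ((α + θ) / 2) θ (i / 2) (u ^ 2)

/-- The Christoffel–Darboux kernel of the `N`-point biorthogonal Hermite ensemble:
`K_N^{Her(α)}(x,y) = ∑_{i<N} S_i^α(x^θ;θ) T_i^α(y;θ)`, where `x^θ = sign(x)|x|^θ`. -/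
noncomputable def KHer (α θ : ℝ) (N : ℕ) (x y : ℝ) : ℝ :=
  ∑ i ∈ Finset.range N, hermiteS α θ i (sgnPow x θ) * hermiteT α θ i y

open Finset Polynomial

theorem Real.Gamma_nat_add_eq_mul_ascPochhammer {c : ℝ} (hc : 0 < c) (n : ℕ) :
    Real.Gamma (n + c) = Real.Gamma c * (ascPochhammer ℝ n).eval c := by
  induction n with
  | zero => simp
  | succ n ih =>
    rw [Nat.cast_succ, add_right_comm, Real.Gamma_add_one (by positivity), ih,
      ascPochhammer_succ_eval]
    ring

theorem sum_range_alternating_choose_mul_eval_eq_zero {R : Type*} [CommRing R] {P : R[X]}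
    {r : ℕ} (hP : P.natDegree < r) :
    ∑ i ∈ range (r + 1), (-1) ^ i * (r.choose i : R) * P.eval (i : R) = 0 := by
  have h := congr_fun (fwdDiff_iter_eq_zero_of_degree_lt hP) 0
  rw [fwdDiff_iter_eq_sum_shift] at h
  calc _ = (-1) ^ r * ∑ i ∈ range (r + 1),
        ((-1 : ℤ) ^ (r - i) * r.choose i) • P.eval (0 + i • 1) := by
        rw [mul_sum]
        refine sum_congr rfl fun i hi => ?_
        obtain ⟨d, rfl⟩ := Nat.exists_eq_add_of_le (Nat.lt_succ_iff.1 (mem_range.1 hi))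
        simp only [zsmul_eq_mul, nsmul_eq_mul, Nat.add_sub_cancel_left, zero_add, mul_one]
        push_cast
        linear_combination -((i + d).choose i * P.eval (i : R) * (-1) ^ i) *
          (Even.neg_one_pow ⟨d, rfl⟩ : (-1 : R) ^ (d + d) = 1)
    _ = 0 := by rw [h, Pi.zero_apply, mul_zero]

theorem sum_range_alternating_choose_mul_ascPochhammer_eq_zero {K : Type*} [Field K]
    {θ : K} (hθ : θ ≠ 0) (β : K) {n r : ℕ} (h : n < r) :
    ∑ i ∈ range (r + 1), (-1) ^ i * (r.choose i : K) *
      (ascPochhammer K n).eval ((i + β + 1) / θ) = 0 := by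
  set P := (ascPochhammer K n).comp (C θ⁻¹ * X + C ((β + 1) / θ))
  have hP : P.natDegree < r :=
    natDegree_comp_le.trans_lt (by
      rw [ascPochhammer_natDegree]
      exact (Nat.mul_le_mul_left n natDegree_linear_le).trans_lt (by rwa [mul_one]))
  rw [← sum_range_alternating_choose_mul_eval_eq_zero hP]
  refine sum_congr rfl fun i _ => ?_
  simp only [P, eval_comp, eval_add, eval_mul, eval_C, eval_X]
  congr 2
  field_simp
  ring

theorem sum_range_choose_div_factorial_mul_ascPochhammer {K : Type*} [Field K] [CharZero K]
    {c : K} {j M : ℕ} (hc : c + j ≠ 0) (hj : j < M) :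
    ∑ n ∈ range M, (n.choose j : K) / n.factorial * (ascPochhammer K n).eval c =
      (ascPochhammer K M).eval c / (j.factorial * (M - 1 - j).factorial * (c + j)) := by
  obtain ⟨L, rfl⟩ := Nat.exists_eq_add_of_lt hj
  rw [show j + L + 1 - 1 - j = L by omega]
  clear hj
  induction L with
  | zero =>
    rw [sum_range_succ, sum_eq_zero fun n hn => by
      rw [Nat.choose_eq_zero_of_lt (mem_range.1 hn), Nat.cast_zero, zero_div, zero_mul]]
    rw [add_zero, ascPochhammer_succ_eval, Nat.choose_self]
    field_simp
    simp
  | succ L ih =>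
    have hchoose : ((j + L + 1).choose j : K) * j.factorial * (L + 1).factorial =
        (j + L + 1).factorial := by
      have h := Nat.choose_mul_factorial_mul_factorial (Nat.le_add_right j (L + 1))
      rw [Nat.add_sub_cancel_left] at h
      exact_mod_cast h
    rw [show j + (L + 1) + 1 = j + L + 1 + 1 from rfl, sum_range_succ, ih,
      ascPochhammer_succ_eval (j + L + 1)]
    have hchoose_ne : ((j + L + 1).choose j : K) ≠ 0 :=
      Nat.cast_ne_zero.2 (Nat.choose_pos (by omega)).ne'
    rw [← hchoose, Nat.factorial_succ L]
    push_cast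
    field_simp
    ring

theorem Finset.sum_range_two_mul {β : Type*} [AddCommMonoid β] (f : ℕ → β) (M : ℕ) :
    ∑ i ∈ range (2 * M), f i = ∑ n ∈ range M, (f (2 * n) + f (2 * n + 1)) := by
  induction M with
  | zero => simp
  | succ M ih =>
    rw [mul_add_one, sum_range_succ, sum_range_succ, ih, sum_range_succ, add_assoc]

theorem sgnPow_sq {θ : ℝ} (hθ : θ ≠ 0) (x : ℝ) : sgnPow x θ ^ 2 = (x ^ 2) ^ θ := by
  rcases eq_or_ne x 0 with rfl | hx
  · simp [sgnPow, Real.zero_rpow hθ]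
  · have hsign : Real.sign x ^ 2 = 1 := by
      rcases Real.sign_apply_eq_of_ne_zero x hx with h | h <;> simp [h]
    rw [sgnPow, mul_pow, hsign, one_mul, Real.rpow_pow_comm (abs_nonneg x), sq_abs]

section Laguerre

variable {β θ : ℝ}

theorem konhauserZ_eq_sum_range {n N : ℕ} (hn : n < N) (u : ℝ) :
    konhauserZ β θ n u =
      ∑ j ∈ range N, (n.choose j : ℝ) * (-1) ^ j * u ^ j / Real.Gamma (θ * j + β + 1) :=
  sum_subset (range_subset_range.2 hn) fun j _ hj => by
    rw [Nat.choose_eq_zero_of_lt (by simpa using hj)]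
    simp

theorem konhauserY_eq_sum_range (hθ : θ ≠ 0) {n N : ℕ} (hn : n < N) (w : ℝ) :
    konhauserY β θ n w = 1 / n.factorial * ∑ r ∈ range N, w ^ r / r.factorial *
      ∑ i ∈ range (r + 1), (-1) ^ i * (r.choose i : ℝ) *
        (ascPochhammer ℝ n).eval ((i + β + 1) / θ) :=
  congrArg _ <| sum_subset (range_subset_range.2 hn) fun r _ hr => by
    rw [sum_range_alternating_choose_mul_ascPochhammer_eq_zero hθ β (by simpa using hr),
      mul_zero]

theorem KLag_eq_sum (hθ : 0 < θ) (hβ : -1 < β) (M : ℕ) (a w : ℝ) :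
    KLag β θ M a w = ∑ k ∈ range M, ∑ r ∈ range M, ∑ i ∈ range (r + 1),
      (-1) ^ k * a ^ (θ * k) / Real.Gamma (θ * k + β + 1) *
        (w ^ r / r.factorial * ((-1) ^ i * r.choose i)) *
        ((ascPochhammer ℝ M).eval ((i + β + 1) / θ) /
          (k.factorial * (M - 1 - k).factorial * ((i + β + 1) / θ + k))) := by
  rw [KLag]
  simp_rw [mul_sum]
  refine sum_congr rfl fun k hk => ?_
  rw [sum_comm' (s := range M) (t := fun i => Icc i (M - 1)) (t' := range M)
    (s' := fun r => range (r + 1)) (fun i r => by simp only [mem_range, mem_Icc]; omega)]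
  refine sum_congr rfl fun r _ => sum_congr rfl fun i hi => ?_
  have hi : i ≤ r := Nat.lt_succ_iff.1 (mem_range.1 hi)
  have hc : 0 < (i + β + 1) / θ := div_pos (by linarith [(Nat.cast_nonneg i : (0 : ℝ) ≤ i)]) hθ
  have hΓk : 0 < Real.Gamma (θ * k + β + 1) :=
    Real.Gamma_pos_of_pos (by nlinarith [(Nat.cast_nonneg k : (0 : ℝ) ≤ k)])
  have hchoose : (r.choose i : ℝ) * i.factorial * (r - i).factorial = r.factorial := by
    exact_mod_cast Nat.choose_mul_factorial_mul_factorial hi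
  have hden : β + θ * k + i + 1 = θ * ((i + β + 1) / θ + k) := by
    field_simp
    ring
  rw [Real.Gamma_nat_add_eq_mul_ascPochhammer hc, hden,
    show β + θ * k + 1 = θ * k + β + 1 by ring, ← hchoose, pow_add]
  have hΓc := (Real.Gamma_pos_of_pos hc).ne'
  have hchoose_ne := (Nat.cast_pos.2 (Nat.choose_pos hi) : (0 : ℝ) < r.choose i).ne'
  field_simp

theorem sum_konhauserZ_mul_konhauserY (hθ : 0 < θ) (hβ : -1 < β) (M : ℕ) {a : ℝ} (ha : 0 ≤ a)
    (w : ℝ) :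
    ∑ n ∈ range M, konhauserZ β θ n (a ^ θ) * konhauserY β θ n w = KLag β θ M a w := by
  rw [KLag_eq_sum hθ hβ]
  calc _ = ∑ n ∈ range M, ∑ k ∈ range M, ∑ r ∈ range M, ∑ i ∈ range (r + 1),
        (-1) ^ k * a ^ (θ * k) / Real.Gamma (θ * k + β + 1) *
          (w ^ r / r.factorial * ((-1) ^ i * r.choose i)) *
          ((n.choose k : ℝ) / n.factorial * (ascPochhammer ℝ n).eval ((i + β + 1) / θ)) := by
        refine sum_congr rfl fun n hn => ?_
        rw [konhauserZ_eq_sum_range (mem_range.1 hn),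
          konhauserY_eq_sum_range hθ.ne' (mem_range.1 hn), sum_mul]
        refine sum_congr rfl fun k _ => ?_
        simp only [← Real.rpow_mul_natCast ha, mul_sum]
        exact sum_congr rfl fun r _ => sum_congr rfl fun i _ => by ring
    _ = ∑ k ∈ range M, ∑ r ∈ range M, ∑ i ∈ range (r + 1),
        (-1) ^ k * a ^ (θ * k) / Real.Gamma (θ * k + β + 1) *
          (w ^ r / r.factorial * ((-1) ^ i * r.choose i)) *
          ∑ n ∈ range M, (n.choose k : ℝ) / n.factorial *
            (ascPochhammer ℝ n).eval ((i + β + 1) / θ) := by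
        simp_rw [mul_sum]
        rw [sum_comm]
        refine sum_congr rfl fun k _ => ?_
        rw [sum_comm]
        refine sum_congr rfl fun r _ => sum_comm
    _ = _ := by
        refine sum_congr rfl fun k hk => sum_congr rfl fun r _ => sum_congr rfl fun i _ => ?_
        have hc : 0 < (i + β + 1) / θ + k := by
          have : 0 < (i + β + 1) / θ :=
            div_pos (by linarith [(Nat.cast_nonneg i : (0 : ℝ) ≤ i)]) hθ
          positivity
        rw [sum_range_choose_div_factorial_mul_ascPochhammer hc.ne' (mem_range.1 hk)]

end Laguerre

section Hermite

variable (α θ : ℝ) (n : ℕ) (u : ℝ)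

theorem hermiteS_two_mul :
    hermiteS α θ (2 * n) u = konhauserZ ((α - 1) / 2) θ n (u ^ 2) := by
  simp [hermiteS]

theorem hermiteS_two_mul_add_one :
    hermiteS α θ (2 * n + 1) u = u * konhauserZ ((α + θ) / 2) θ n (u ^ 2) := by
  simp [hermiteS, Nat.add_div_of_dvd_right]

theorem hermiteT_two_mul :
    hermiteT α θ (2 * n) u = konhauserY ((α - 1) / 2) θ n (u ^ 2) := by
  simp [hermiteT]

theorem hermiteT_two_mul_add_one :
    hermiteT α θ (2 * n + 1) u = u * konhauserY ((α + θ) / 2) θ n (u ^ 2) := by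
  simp [hermiteT, Nat.add_div_of_dvd_right]

end Hermite

theorem KHer_eq_KLag_decomposition_general (θ α : ℝ) (hθ : 0 < θ) (hα : -1 < α)
    (M : ℕ) (x y : ℝ) :
    KHer α θ (2 * M) x y =
      KLag ((α - 1) / 2) θ M (x ^ 2) (y ^ 2) +
        sgnPow x θ * y * KLag ((α + θ) / 2) θ M (x ^ 2) (y ^ 2) := by
  have hβ₁ : -1 < (α - 1) / 2 := by linarith
  have hβ₂ : -1 < (α + θ) / 2 := by linarith
  rw [← sum_konhauserZ_mul_konhauserY hθ hβ₁ M (sq_nonneg x),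
    ← sum_konhauserZ_mul_konhauserY hθ hβ₂ M (sq_nonneg x), ← sgnPow_sq hθ.ne', mul_sum,
    KHer, sum_range_two_mul, sum_add_distrib]
  simp only [hermiteS_two_mul, hermiteT_two_mul, hermiteS_two_mul_add_one,
    hermiteT_two_mul_add_one]
  exact congrArg _ (sum_congr rfl fun n _ => by ring)

/-- **Decomposition of the Hermite Christoffel–Darboux kernel into Laguerre
kernels:** `K_{2M}^{Her(α)}(x,y) = K_M^{Lag((α-1)/2)}(x²,y²) +
x^θ y · K_M^{Lag((α+θ)/2)}(x²,y²)`. -/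
theorem KHer_eq_KLag_decomposition (θ α : ℝ) (hθ : 0 < θ) (hα : -1 < α)
    (M : ℕ) (hM : 1 ≤ M) (x y : ℝ) :
    KHer α θ (2 * M) x y =
      KLag ((α - 1) / 2) θ M (x ^ 2) (y ^ 2) +
        sgnPow x θ * y * KLag ((α + θ) / 2) θ M (x ^ 2) (y ^ 2) :=
  KHer_eq_KLag_decomposition_general θ α hθ hα M x y
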